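/- Let s ≥ 3 be an integer and T(i0, i1) = {(i, j) ∈ ℤ² : s·i0 ≤ i + j < s·(1 + i0) and s·i1 ≤ j − i < s·(1 + i1)}, with footprint under B(i,j) = i. Then for all (i0, i1), (i2, i3) ∈ ℤ², the footprints B⟨T(i0, i1)⟩ and B⟨T(i2, i3)⟩ have nonempty intersection if and only if |(i0 − i1) − (i2 − i3)| ≤ 1. In particular the consumer tiles of T(i0,i1) are exactly the three families {(i0 + p, i1 + p)}, {(i0 + p + 1, i1 + p)}, {(i0 + p − 1, i1 + p)} for p ∈ ℤ. -/

import Mathlib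

/-!
Since `2i = (i + j) - (j - i)`, the footprint of `T(a, b)` is the set of `i` with
`|2i - s(a - b)| < s`: an open interval of length `2s` for `2i`, centred at `s(a - b)`.
Two such intervals whose centres differ by `s·k` share an even integer iff `|k| ≤ 1`; for
`|k| = 1` the common part is the open interval of length `s` between the centres, which
contains an even integer exactly because `s ≥ 3`.
-/

def tile (s a b : ℤ) : Set (ℤ × ℤ) :=
  {p | (s * a ≤ p.1 + p.2 ∧ p.1 + p.2 < s * (1 + a)) ∧
    (s * b ≤ p.2 - p.1 ∧ p.2 - p.1 < s * (1 + b))}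

lemma exists_mem_tile_iff {s a b i : ℤ} :
    (∃ j, (i, j) ∈ tile s a b) ↔ |2 * i - s * (a - b)| < s := by
  simp only [tile, Set.mem_ofPred_eq, abs_lt]
  constructor
  · rintro ⟨j, ⟨h₁, h₂⟩, h₃, h₄⟩
    constructor <;> linarith
  · rintro ⟨hlo, hhi⟩
    have hs : 0 < s := by linarith
    set j := max (s * a - i) (s * b + i)
    have hja : s * a - i ≤ j := le_max_left _ _
    have hjb : s * b + i ≤ j := le_max_right _ _
    have hja' : j < s * (1 + a) - i := max_lt (by linarith) (by linarith)
    have hjb' : j < s * (1 + b) + i := max_lt (by linarith) (by linarith)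
    exact ⟨j, ⟨by linarith, by linarith⟩, by linarith, by linarith⟩

lemma exists_even_near_adjacent_multiples {s : ℤ} (hs : 3 ≤ s) (m : ℤ) :
    ∃ i, |2 * i - s * m| < s ∧ |2 * i - s * (m + 1)| < s := by
  have h : s * (m + 1) = s * m + s := by ring
  refine ⟨(s * m + 2) / 2, ?_, ?_⟩ <;> rw [abs_lt] <;> omega

lemma exists_near_both_iff {s : ℤ} (hs : 3 ≤ s) (x y : ℤ) :
    (∃ i, |2 * i - s * x| < s ∧ |2 * i - s * y| < s) ↔ |x - y| ≤ 1 := by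
  constructor
  · rintro ⟨i, hx, hy⟩
    have hxy : s * |x - y| < s * 2 := by
      calc s * |x - y| = |s * (x - y)| := by rw [abs_mul, abs_of_pos (by omega : 0 < s)]
        _ = |(2 * i - s * y) - (2 * i - s * x)| := by congr 1; ring
        _ ≤ |2 * i - s * y| + |2 * i - s * x| := abs_sub _ _
        _ < s * 2 := by linarith
    have := lt_of_mul_lt_mul_left hxy (by omega)
    omega
  · intro hxy
    rw [abs_le] at hxy
    obtain ⟨i, hm, hm₁⟩ := exists_even_near_adjacent_multiples hs (min x y)
    have near : ∀ z, z = min x y ∨ z = min x y + 1 → |2 * i - s * z| < s := by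
      rintro z (rfl | rfl) <;> assumption
    exact ⟨i, near x (by omega), near y (by omega)⟩

lemma abs_sub_sub_le_one_iff (a b c d : ℤ) :
    |(a - b) - (c - d)| ≤ 1 ↔
      ∃ p, (c, d) = (a + p, b + p) ∨ (c, d) = (a + p + 1, b + p) ∨
        (c, d) = (a + p - 1, b + p) := by
  simp only [Prod.mk.injEq, abs_le]
  constructor
  · intro h
    exact ⟨d - b, by omega⟩
  · rintro ⟨p, h | h | h⟩ <;> omega

/-- for `s ≥ 3`, the footprints of tiles `T(i0,i1)` and `T(i2,i3)` under
`B(i,j) = i` overlap iff `|(i0 − i1) − (i2 − i3)| ≤ 1`; in particular the consumer tiles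
of `T(i0,i1)` are exactly the three families `(i0+p, i1+p)`, `(i0+p+1, i1+p)`,
`(i0+p−1, i1+p)` for `p ∈ ℤ`. -/
theorem single_dep_consumer_tiles
    (s : ℤ) (hs : 3 ≤ s)
    (T : ℤ → ℤ → Set (ℤ × ℤ))
    (hT : ∀ i0 i1, T i0 i1 = {p : ℤ × ℤ |
        (s * i0 ≤ p.1 + p.2 ∧ p.1 + p.2 < s * (1 + i0)) ∧
        (s * i1 ≤ p.2 - p.1 ∧ p.2 - p.1 < s * (1 + i1))})
    (fp : ℤ → ℤ → Set ℤ)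
    (hfp : ∀ i0 i1, fp i0 i1 = {i : ℤ | ∃ j : ℤ, (i, j) ∈ T i0 i1}) :
    (∀ i0 i1 i2 i3 : ℤ,
      (fp i0 i1 ∩ fp i2 i3).Nonempty ↔ |(i0 - i1) - (i2 - i3)| ≤ 1) ∧
    (∀ i0 i1 : ℤ,
      {q : ℤ × ℤ | (fp i0 i1 ∩ fp q.1 q.2).Nonempty} =
        {q : ℤ × ℤ | ∃ p : ℤ,
          q = (i0 + p, i1 + p) ∨ q = (i0 + p + 1, i1 + p) ∨ q = (i0 + p - 1, i1 + p)}) := by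
  have mem_fp : ∀ a b i, i ∈ fp a b ↔ |2 * i - s * (a - b)| < s := fun a b i => by
    rw [hfp, hT]
    exact exists_mem_tile_iff
  have overlap : ∀ i0 i1 i2 i3 : ℤ,
      (fp i0 i1 ∩ fp i2 i3).Nonempty ↔ |(i0 - i1) - (i2 - i3)| ≤ 1 := fun i0 i1 i2 i3 => by
    simp only [Set.Nonempty, Set.mem_inter_iff, mem_fp]
    exact exists_near_both_iff hs _ _
  refine ⟨overlap, fun i0 i1 => ?_⟩
  ext ⟨c, d⟩
  simp only [Set.mem_ofPred_eq, overlap]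
  exact abs_sub_sub_le_one_iff i0 i1 c d
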